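/- In the setting of the E_q(2) entwining data with e = c_s and coaction Δ_R(u) = ψ(c_s ⊗ u) (with μ, ν ∈ k*), the elements z = v + μ⁻¹q^{−2s}n and z̄ = v⁻¹ + ν⁻¹q^{−2s}n̄ are coinvariant (Δ_R z = z ⊗ c_s, Δ_R z̄ = z̄ ⊗ c_s) and satisfy z z̄ = q² z̄ z + (1 − q²). -/

import Mathlib

open TensorProduct LinearMap

noncomputable section

namespace Entwine

variable (k : Type) [Field k] (P : Type) [Ring P] [Algebra k P]
  (C : Type) [AddCommGroup C] [Module k C] [Coalgebra k C]

/-- coproduct of `C` -/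
abbrev Δ : C →ₗ[k] C ⊗[k] C := Coalgebra.comul
/-- counit of `C` -/
abbrev ε : C →ₗ[k] k := Coalgebra.counit
/-- multiplication of `P` -/
abbrev μ : P ⊗[k] P →ₗ[k] P := LinearMap.mul' k P

variable (ψ : C ⊗[k] P →ₗ[k] P ⊗[k] C)

/-- entwining axiom `ψ∘(id⊗μ) = (μ⊗id)∘ψ₂₃∘ψ₁₂` -/
def AxMul : Prop :=
  ψ ∘ₗ map LinearMap.id (μ k P) =
    map (μ k P) LinearMap.id
      ∘ₗ (TensorProduct.assoc k P P C).symm.toLinearMap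
      ∘ₗ map LinearMap.id ψ
      ∘ₗ (TensorProduct.assoc k P C P).toLinearMap
      ∘ₗ map ψ LinearMap.id
      ∘ₗ (TensorProduct.assoc k C P P).symm.toLinearMap

/-- entwining axiom `ψ(c ⊗ 1) = 1 ⊗ c` -/
def AxOne : Prop := ∀ c : C, ψ (c ⊗ₜ (1 : P)) = (1 : P) ⊗ₜ c

/-- entwining axiom `(id⊗Δ)∘ψ = ψ₁₂∘ψ₂₃∘(Δ⊗id)` -/
def AxComul : Prop :=
  map LinearMap.id (Δ k C) ∘ₗ ψ =
    (TensorProduct.assoc k P C C).toLinearMap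
      ∘ₗ map ψ LinearMap.id
      ∘ₗ (TensorProduct.assoc k C P C).symm.toLinearMap
      ∘ₗ map LinearMap.id ψ
      ∘ₗ (TensorProduct.assoc k C C P).toLinearMap
      ∘ₗ map (Δ k C) LinearMap.id

/-- entwining axiom `(id⊗ε)∘ψ = ε⊗id` -/
def AxCounit : Prop :=
  (TensorProduct.rid k P).toLinearMap ∘ₗ map LinearMap.id (ε k C) ∘ₗ ψ =
    (TensorProduct.lid k P).toLinearMap ∘ₗ map (ε k C) LinearMap.id

/-- `ψ` is an entwining map for the algebra `P` and the coalgebra `C` -/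
def IsEntwining : Prop :=
  AxMul k P C ψ ∧ AxOne k P C ψ ∧ AxComul k P C ψ ∧ AxCounit k P C ψ

variable (e : C)

/-- `e` is a group-like element -/
def IsGrouplike : Prop :=
  Δ k C e = e ⊗ₜ[k] e ∧ ε k C e = 1

variable (ψC : C ⊗[k] C →ₗ[k] C ⊗[k] C)

/-- `(id⊗Δ)∘ψ^C = ψ^C₁₂∘ψ^C₂₃∘(Δ⊗id)` -/
def AxPsiCComul : Prop :=
  map LinearMap.id (Δ k C) ∘ₗ ψC =
    (TensorProduct.assoc k C C C).toLinearMap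
      ∘ₗ map ψC LinearMap.id
      ∘ₗ (TensorProduct.assoc k C C C).symm.toLinearMap
      ∘ₗ map LinearMap.id ψC
      ∘ₗ (TensorProduct.assoc k C C C).toLinearMap
      ∘ₗ map (Δ k C) LinearMap.id

/-- `(id⊗ε)∘ψ^C = ε⊗id` -/
def AxPsiCCounit : Prop :=
  (TensorProduct.rid k C).toLinearMap ∘ₗ map LinearMap.id (ε k C) ∘ₗ ψC =
    (TensorProduct.lid k C).toLinearMap ∘ₗ map (ε k C) LinearMap.id

/-- `ψ^C(e ⊗ c) = Δc` -/
def AxPsiCUnit : Prop := ∀ c : C, ψC (e ⊗ₜ[k] c) = Δ k C c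

/-- `(P, C, ψ, e, ψ^C)` form entwining data -/
def IsEntwiningData : Prop :=
  IsEntwining k P C ψ ∧ IsGrouplike k C e ∧
    AxPsiCComul k C ψC ∧ AxPsiCCounit k C ψC ∧ AxPsiCUnit k C e ψC

/-- the right coaction `Δ_R u = ψ(e ⊗ u)` on `P` -/
def deltaR : P →ₗ[k] P ⊗[k] C := ψ ∘ₗ TensorProduct.mk k C P e

/-- the fixed point subspace `M = P^{coC}_e`, as a submodule of `P` -/
def Msub : Submodule k P where
  carrier := {x : P | ψ (e ⊗ₜ x) = x ⊗ₜ e}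
  add_mem' := by
    intro a b ha hb
    simp only [Set.mem_setOf_eq] at *
    rw [TensorProduct.tmul_add, map_add, ha, hb, TensorProduct.add_tmul]
  zero_mem' := by
    simp only [Set.mem_setOf_eq, TensorProduct.tmul_zero, map_zero,
      TensorProduct.zero_tmul]
  smul_mem' := by
    intro r x hx
    simp only [Set.mem_setOf_eq] at *
    rw [TensorProduct.tmul_smul, map_smul, hx, TensorProduct.smul_tmul']

/-- the subspace `M ⊗ C` of `P ⊗ C` -/
def MCsub : Submodule k (P ⊗[k] C) :=
  LinearMap.range (map (Msub k P C ψ e).subtype (LinearMap.id : C →ₗ[k] C))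

variable (ρ : C ⊗[k] P →ₗ[k] P) (σ : C ⊗[k] C →ₗ[k] P)

/-- the map `ρ̂ : c ⊗ x ↦ ρ(c₍₁₎ ⊗ x_α) ⊗ c₍₂₎^α` -/
def rhat : C ⊗[k] P →ₗ[k] P ⊗[k] C :=
  map ρ LinearMap.id
    ∘ₗ (TensorProduct.assoc k C P C).symm.toLinearMap
    ∘ₗ map LinearMap.id ψ
    ∘ₗ (TensorProduct.assoc k C C P).toLinearMap
    ∘ₗ map (Δ k C) LinearMap.id

/-- the map `σ̂ : b ⊗ c ↦ σ(b₍₁₎ ⊗ c_A) ⊗ b₍₂₎^A` -/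
def shat : C ⊗[k] C →ₗ[k] P ⊗[k] C :=
  map σ LinearMap.id
    ∘ₗ (TensorProduct.assoc k C C C).symm.toLinearMap
    ∘ₗ map LinearMap.id ψC
    ∘ₗ (TensorProduct.assoc k C C C).toLinearMap
    ∘ₗ map (Δ k C) LinearMap.id

/-- multiplication of the first two factors: `x ⊗ (y ⊗ c) ↦ xy ⊗ c` -/
def mulPC : P ⊗[k] (P ⊗[k] C) →ₗ[k] P ⊗[k] C :=
  map (μ k P) LinearMap.id ∘ₗ (TensorProduct.assoc k P P C).symm.toLinearMap

/-- the crossed product `(x ⊗ b)(y ⊗ c) = xρ(b₍₁₎⊗y_α)σ(b₍₂₎^α₍₁₎⊗c_A) ⊗ b₍₂₎^α₍₂₎^A` -/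
def prodX : (P ⊗[k] C) ⊗[k] (P ⊗[k] C) →ₗ[k] P ⊗[k] C :=
  mulPC k P C
    ∘ₗ map LinearMap.id (mulPC k P C)
    ∘ₗ map LinearMap.id
        (map LinearMap.id (shat k P C ψC σ)
          ∘ₗ (TensorProduct.assoc k P C C).toLinearMap)
    ∘ₗ map LinearMap.id
        (map (rhat k P C ψ ρ) LinearMap.id
          ∘ₗ (TensorProduct.assoc k C P C).symm.toLinearMap)
    ∘ₗ (TensorProduct.assoc k P C (P ⊗[k] C)).toLinearMap

/-- condition (i): `ρ(e,x) = x` for `x ∈ M` and `ρ(c,1) = ε(c)1` -/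
def CondI : Prop :=
  (∀ x : P, x ∈ Msub k P C ψ e → ρ (e ⊗ₜ x) = x) ∧
    ∀ c : C, ρ (c ⊗ₜ (1 : P)) = ε k C c • (1 : P)

/-- condition (ii): `ρ̂` maps `C ⊗ M` into `M ⊗ C` -/
def CondII : Prop :=
  ∀ (c : C) (x : P), x ∈ Msub k P C ψ e →
    rhat k P C ψ ρ (c ⊗ₜ x) ∈ MCsub k P C ψ e

/-- the right hand side of condition (iii): `(μ⊗id)∘(id⊗ρ̂)∘(ρ̂⊗id)` -/
def BmapIII : C ⊗[k] (P ⊗[k] P) →ₗ[k] P ⊗[k] C :=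
  mulPC k P C
    ∘ₗ map LinearMap.id (rhat k P C ψ ρ)
    ∘ₗ (TensorProduct.assoc k P C P).toLinearMap
    ∘ₗ map (rhat k P C ψ ρ) LinearMap.id
    ∘ₗ (TensorProduct.assoc k C P P).symm.toLinearMap

/-- condition (iii): twisted multiplicativity of `ρ` -/
def CondIII : Prop :=
  ∀ (c : C) (x y : P), x ∈ Msub k P C ψ e → y ∈ Msub k P C ψ e →
    rhat k P C ψ ρ (c ⊗ₜ (x * y)) = BmapIII k P C ψ ρ (c ⊗ₜ (x ⊗ₜ y))

/-- `σ` takes values in `M` -/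
def SigmaIntoM : Prop := ∀ b c : C, σ (b ⊗ₜ c) ∈ Msub k P C ψ e

/-- condition (iv): `σ(e⊗c) = ε(c)1` and `σ(c₍₁₎⊗e_A) ⊗ c₍₂₎^A = 1 ⊗ c` -/
def CondIV : Prop :=
  (∀ c : C, σ (e ⊗ₜ c) = ε k C c • (1 : P)) ∧
    ∀ c : C, shat k P C ψC σ (c ⊗ₜ e) = (1 : P) ⊗ₜ c

/-- `(ρ, σ)` are crossed product data: conditions (i)–(iv). -/
def IsCrossedData : Prop :=
  CondI k P C ψ e ρ ∧ CondII k P C ψ e ρ ∧ CondIII k P C ψ e ρ ∧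
    SigmaIntoM k P C ψ e σ ∧ CondIV k P C e ψC σ

/-- left hand side of the cocycle condition (2.6) -/
def CocLHS : C ⊗[k] (C ⊗[k] C) →ₗ[k] P ⊗[k] C :=
  mulPC k P C
    ∘ₗ map LinearMap.id (shat k P C ψC σ)
    ∘ₗ (TensorProduct.assoc k P C C).toLinearMap
    ∘ₗ map (rhat k P C ψ ρ) LinearMap.id
    ∘ₗ (TensorProduct.assoc k C P C).symm.toLinearMap
    ∘ₗ map LinearMap.id (shat k P C ψC σ)

/-- right hand side of the cocycle condition (2.6) -/
def CocRHS : C ⊗[k] (C ⊗[k] C) →ₗ[k] P ⊗[k] C :=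
  mulPC k P C
    ∘ₗ map LinearMap.id (shat k P C ψC σ)
    ∘ₗ (TensorProduct.assoc k P C C).toLinearMap
    ∘ₗ map (shat k P C ψC σ) LinearMap.id
    ∘ₗ (TensorProduct.assoc k C C C).symm.toLinearMap

/-- the cocycle condition (2.6) -/
def Cocycle : Prop := CocLHS k P C ψ ψC ρ σ = CocRHS k P C ψC σ

/-- left hand side of the twisted module condition (2.7) -/
def TwLHS : C ⊗[k] (C ⊗[k] P) →ₗ[k] P ⊗[k] C :=
  mulPC k P C
    ∘ₗ map LinearMap.id (shat k P C ψC σ)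
    ∘ₗ (TensorProduct.assoc k P C C).toLinearMap
    ∘ₗ map (rhat k P C ψ ρ) LinearMap.id
    ∘ₗ (TensorProduct.assoc k C P C).symm.toLinearMap
    ∘ₗ map LinearMap.id (rhat k P C ψ ρ)

/-- right hand side of the twisted module condition (2.7) -/
def TwRHS : C ⊗[k] (C ⊗[k] P) →ₗ[k] P ⊗[k] C :=
  mulPC k P C
    ∘ₗ map LinearMap.id (rhat k P C ψ ρ)
    ∘ₗ (TensorProduct.assoc k P C P).toLinearMap
    ∘ₗ map (shat k P C ψC σ) LinearMap.id
    ∘ₗ (TensorProduct.assoc k C C P).symm.toLinearMap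

/-- the twisted module condition (2.7), for `x ∈ M` -/
def Twisted : Prop :=
  ∀ (a b : C) (x : P), x ∈ Msub k P C ψ e →
    TwLHS k P C ψ ψC ρ σ (a ⊗ₜ (b ⊗ₜ x)) = TwRHS k P C ψ ψC ρ σ (a ⊗ₜ (b ⊗ₜ x))

end Entwine

namespace Eq2Ex

variable (k : Type) [Field k] (q : kˣ)

/-- the defining relations of the quantum Euclidean group `E_q(2)`, on the free
algebra with generators `0 ↦ v`, `1 ↦ v⁻¹`, `2 ↦ n`, `3 ↦ n̄`:
`vn = q²nv`, `vn̄ = q²n̄v`, `nn̄ = q²n̄n`, `vv⁻¹ = v⁻¹v = 1`. -/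
inductive EqRel : FreeAlgebra k (Fin 4) → FreeAlgebra k (Fin 4) → Prop
  | vn : EqRel (FreeAlgebra.ι k 0 * FreeAlgebra.ι k 2)
      (((q : k) ^ 2) • (FreeAlgebra.ι k 2 * FreeAlgebra.ι k 0))
  | vnb : EqRel (FreeAlgebra.ι k 0 * FreeAlgebra.ι k 3)
      (((q : k) ^ 2) • (FreeAlgebra.ι k 3 * FreeAlgebra.ι k 0))
  | nnb : EqRel (FreeAlgebra.ι k 2 * FreeAlgebra.ι k 3)
      (((q : k) ^ 2) • (FreeAlgebra.ι k 3 * FreeAlgebra.ι k 2))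
  | vvi : EqRel (FreeAlgebra.ι k 0 * FreeAlgebra.ι k 1) 1
  | viv : EqRel (FreeAlgebra.ι k 1 * FreeAlgebra.ι k 0) 1

/-- the quantum Euclidean group `E_q(2)` -/
abbrev Eq2 : Type := RingQuot (EqRel k q)

/-- the generator `v` -/
def vE : Eq2 k q := RingQuot.mkAlgHom k (EqRel k q) (FreeAlgebra.ι k 0)
/-- the generator `v⁻¹` -/
def viE : Eq2 k q := RingQuot.mkAlgHom k (EqRel k q) (FreeAlgebra.ι k 1)
/-- the generator `n` -/
def nE : Eq2 k q := RingQuot.mkAlgHom k (EqRel k q) (FreeAlgebra.ι k 2)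
/-- the generator `n̄` -/
def nbE : Eq2 k q := RingQuot.mkAlgHom k (EqRel k q) (FreeAlgebra.ι k 3)

/-- the coalgebra `C` spanned by the group-like elements `c_p`, `p ∈ ℤ` -/
abbrev Cz : Type := ℤ →₀ k

/-- the group-like basis element `c_p` -/
def cz (p : ℤ) : Cz k := Finsupp.single p (1 : k)

variable (μv νv : kˣ) (s : ℤ)

/-- `ψ` takes the prescribed values on the generators of `E_q(2)`. -/
def PsiOnGens (ψ : Cz k ⊗[k] Eq2 k q →ₗ[k] Eq2 k q ⊗[k] Cz k) : Prop :=
  (∀ p : ℤ, ψ (cz k p ⊗ₜ vE k q) = vE k q ⊗ₜ cz k (p + 1)) ∧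
  (∀ p : ℤ, ψ (cz k p ⊗ₜ viE k q) = viE k q ⊗ₜ cz k (p - 1)) ∧
  (∀ p : ℤ, ψ (cz k p ⊗ₜ nE k q) =
    nE k q ⊗ₜ cz k p
      + ((μv : k) * ((q ^ (2 * p) : kˣ) : k)) • (vE k q ⊗ₜ cz k p)
      - ((μv : k) * ((q ^ (2 * p) : kˣ) : k)) • (vE k q ⊗ₜ cz k (p + 1))) ∧
  (∀ p : ℤ, ψ (cz k p ⊗ₜ nbE k q) =
    nbE k q ⊗ₜ cz k p
      + ((νv : k) * ((q ^ (2 * p) : kˣ) : k)) • (viE k q ⊗ₜ cz k p)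
      - ((νv : k) * ((q ^ (2 * p) : kˣ) : k)) • (viE k q ⊗ₜ cz k (p - 1)))

end Eq2Ex

/-! The coaction shifts the grading of `v` by one while the correction term of `n` is
`μ q^{2s} (v ⊗ c_s - v ⊗ c_{s+1})`, so adding `(μ q^{2s})⁻¹ n` to `v` cancels the shift;
likewise for `v⁻¹` and `n̄`. The commutation relation only uses the defining relations of
`E_q(2)`, together with `n v⁻¹ = q² v⁻¹ n`, which follows from `v n = q² n v`. -/

section Coinvariance

variable {R C P : Type*} [CommRing R] [AddCommGroup C] [Module R C]
  [AddCommGroup P] [Module R P]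

theorem apply_tmul_add_smul_eq_tmul (ψ : C ⊗[R] P →ₗ[R] P ⊗[R] C) {e e' : C} {g h : P}
    {l a : R} (hal : a * l = 1) (hg : ψ (e ⊗ₜ g) = g ⊗ₜ e')
    (hh : ψ (e ⊗ₜ h) = h ⊗ₜ e + l • (g ⊗ₜ e) - l • (g ⊗ₜ e')) :
    ψ (e ⊗ₜ (g + a • h)) = (g + a • h) ⊗ₜ e := by
  rw [tmul_add, tmul_smul, map_add, map_smul, hg, hh]
  simp only [smul_sub, smul_add, add_tmul, smul_tmul', smul_smul, hal, one_smul]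
  abel

end Coinvariance

theorem Units.val_inv_mul_zpow_neg_mul {M : Type*} [CommMonoid M] (u w : Mˣ) (m : ℤ) :
    ((u⁻¹ : Mˣ) : M) * ((w ^ (-m) : Mˣ) : M) * ((u : M) * ((w ^ m : Mˣ) : M)) = 1 := by
  rw [← Units.val_mul, ← Units.val_mul, ← Units.val_mul, mul_mul_mul_comm, zpow_neg,
    inv_mul_cancel, inv_mul_cancel, one_mul, Units.val_one]

theorem mul_add_smul_eq_smul_mul_add {R A : Type*} [CommRing R] [Ring A] [Algebra R A]
    {t : R} {v vi n nb : A} (hvvi : v * vi = 1) (hviv : vi * v = 1)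
    (hvnb : v * nb = t • (nb * v)) (hnvi : n * vi = t • (vi * n))
    (hnnb : n * nb = t • (nb * n)) (a b : R) :
    (v + a • n) * (vi + b • nb) = t • ((vi + b • nb) * (v + a • n)) + (1 - t) • (1 : A) := by
  simp only [mul_add, add_mul, smul_mul_assoc, mul_smul_comm, hvvi, hviv, hvnb, hnvi, hnnb,
    smul_smul]
  module

namespace Eq2Ex

variable (k : Type) [Field k] (q : kˣ)

theorem vE_mul_nE : vE k q * nE k q = ((q : k) ^ 2) • (nE k q * vE k q) := by
  simpa [vE, nE] using RingQuot.mkAlgHom_rel k (EqRel.vn (k := k) (q := q))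

theorem vE_mul_nbE : vE k q * nbE k q = ((q : k) ^ 2) • (nbE k q * vE k q) := by
  simpa [vE, nbE] using RingQuot.mkAlgHom_rel k (EqRel.vnb (k := k) (q := q))

theorem nE_mul_nbE : nE k q * nbE k q = ((q : k) ^ 2) • (nbE k q * nE k q) := by
  simpa [nE, nbE] using RingQuot.mkAlgHom_rel k (EqRel.nnb (k := k) (q := q))

theorem vE_mul_viE : vE k q * viE k q = 1 := by
  simpa [vE, viE] using RingQuot.mkAlgHom_rel k (EqRel.vvi (k := k) (q := q))

theorem viE_mul_vE : viE k q * vE k q = 1 := by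
  simpa [vE, viE] using RingQuot.mkAlgHom_rel k (EqRel.viv (k := k) (q := q))

theorem nE_mul_viE : nE k q * viE k q = ((q : k) ^ 2) • (viE k q * nE k q) :=
  calc nE k q * viE k q = viE k q * (vE k q * nE k q) * viE k q := by
        rw [← mul_assoc, viE_mul_vE, one_mul]
    _ = ((q : k) ^ 2) • (viE k q * nE k q) := by
        rw [vE_mul_nE, mul_smul_comm, smul_mul_assoc, mul_assoc, mul_assoc, vE_mul_viE,
          mul_one]

theorem eq2_coinvariants_general (k : Type) [Field k] (q μv νv : kˣ) (s : ℤ)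
    (ψ : Cz k ⊗[k] Eq2 k q →ₗ[k] Eq2 k q ⊗[k] Cz k)
    (hgen : PsiOnGens k q μv νv ψ) :
    ψ (cz k s ⊗ₜ (vE k q + (((μv⁻¹ : kˣ) : k) * ((q ^ (-(2 * s)) : kˣ) : k)) • nE k q)) =
      (vE k q + (((μv⁻¹ : kˣ) : k) * ((q ^ (-(2 * s)) : kˣ) : k)) • nE k q) ⊗ₜ cz k s ∧
    ψ (cz k s ⊗ₜ (viE k q + (((νv⁻¹ : kˣ) : k) * ((q ^ (-(2 * s)) : kˣ) : k)) • nbE k q)) =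
      (viE k q + (((νv⁻¹ : kˣ) : k) * ((q ^ (-(2 * s)) : kˣ) : k)) • nbE k q) ⊗ₜ cz k s ∧
    (vE k q + (((μv⁻¹ : kˣ) : k) * ((q ^ (-(2 * s)) : kˣ) : k)) • nE k q) *
        (viE k q + (((νv⁻¹ : kˣ) : k) * ((q ^ (-(2 * s)) : kˣ) : k)) • nbE k q) =
      ((q : k) ^ 2) •
          ((viE k q + (((νv⁻¹ : kˣ) : k) * ((q ^ (-(2 * s)) : kˣ) : k)) • nbE k q) *
            (vE k q + (((μv⁻¹ : kˣ) : k) * ((q ^ (-(2 * s)) : kˣ) : k)) • nE k q)) +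
        (1 - (q : k) ^ 2) • (1 : Eq2 k q) := by
  obtain ⟨hv, hvi, hn, hnb⟩ := hgen
  exact ⟨apply_tmul_add_smul_eq_tmul ψ (Units.val_inv_mul_zpow_neg_mul μv q _) (hv s) (hn s),
    apply_tmul_add_smul_eq_tmul ψ (Units.val_inv_mul_zpow_neg_mul νv q _) (hvi s) (hnb s),
    mul_add_smul_eq_smul_mul_add (vE_mul_viE k q) (viE_mul_vE k q) (vE_mul_nbE k q)
      (nE_mul_viE k q) (nE_mul_nbE k q) _ _⟩

/-- With `e = c_s` and the coaction `Δ_R(u) = ψ(c_s ⊗ u)`, the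
elements `z = v + μ⁻¹q^{-2s}n` and `z̄ = v⁻¹ + ν⁻¹q^{-2s}n̄` are coinvariant and
satisfy `z z̄ = q² z̄ z + (1 - q²)`. -/
theorem eq2_coinvariants (k : Type) [Field k] (q μv νv : kˣ) (s : ℤ)
    (ψ : Cz k ⊗[k] Eq2 k q →ₗ[k] Eq2 k q ⊗[k] Cz k)
    (hgen : PsiOnGens k q μv νv ψ)
    (hent : Entwine.IsEntwining k (Eq2 k q) (Cz k) ψ) :
    ψ (cz k s ⊗ₜ (vE k q + (((μv⁻¹ : kˣ) : k) * ((q ^ (-(2 * s)) : kˣ) : k)) • nE k q)) =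
      (vE k q + (((μv⁻¹ : kˣ) : k) * ((q ^ (-(2 * s)) : kˣ) : k)) • nE k q) ⊗ₜ cz k s ∧
    ψ (cz k s ⊗ₜ (viE k q + (((νv⁻¹ : kˣ) : k) * ((q ^ (-(2 * s)) : kˣ) : k)) • nbE k q)) =
      (viE k q + (((νv⁻¹ : kˣ) : k) * ((q ^ (-(2 * s)) : kˣ) : k)) • nbE k q) ⊗ₜ cz k s ∧
    (vE k q + (((μv⁻¹ : kˣ) : k) * ((q ^ (-(2 * s)) : kˣ) : k)) • nE k q) *
        (viE k q + (((νv⁻¹ : kˣ) : k) * ((q ^ (-(2 * s)) : kˣ) : k)) • nbE k q) =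
      ((q : k) ^ 2) •
          ((viE k q + (((νv⁻¹ : kˣ) : k) * ((q ^ (-(2 * s)) : kˣ) : k)) • nbE k q) *
            (vE k q + (((μv⁻¹ : kˣ) : k) * ((q ^ (-(2 * s)) : kˣ) : k)) • nE k q)) +
        (1 - (q : k) ^ 2) • (1 : Eq2 k q) :=
  eq2_coinvariants_general k q μv νv s ψ hgen

end Eq2Ex
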